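/- arXiv:1703.00262 — 4 statements merged into one kernel-verified Lean document; each statement's English description precedes it below -/
import Mathlib

section
/- Let Y be a real random variable that is sub-Gaussian with variance factor σ² > 0, i.e. ln E[exp(sY)] ≤ σ²s²/2 for all s ∈ ℝ. Then for all 0 ≤ s < 1/(2σ²), ln E[exp(sY²)] ≤ σ²s + σ⁴s²/(1 − 2σ²s). In particular, Y² − 2σ² is sub-Gamma on the right tail with variance factor 8σ⁴ and scale parameter 4σ² (after shifting, for the centered version Y² − E[Y²]). -/
/-!
Gaussian decoupling: if `g` is a standard Gaussian, then `exp (s y²) = E exp (√(2s) g y)`.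
Exchanging the order of integration and applying the sub-Gaussian bound to each `√(2s) g` gives
`E exp (s Y²) ≤ E exp (σ² s g²) = (1 - 2σ²s)^(-1/2)`. The logarithmic bound then follows from
`log y ≤ sinh (log y) = (y - y⁻¹) / 2` for `y ≥ 1`, and the sub-Gamma bound from comparing
denominators.
-/

open MeasureTheory Real ProbabilityTheory ENNReal

lemma Real.log_le_sub_inv_div_two {y : ℝ} (hy : 1 ≤ y) : log y ≤ (y - y⁻¹) / 2 := by
  rw [← sinh_log (by linarith)]
  exact self_le_sinh_iff.2 (log_nonneg hy)

lemma Real.log_inv_sqrt_one_sub_le {u : ℝ} (hu0 : 0 ≤ u) (hu1 : u < 1) :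
    log (√(1 - u))⁻¹ ≤ u / 2 + u ^ 2 / (4 * (1 - u)) := by
  have hpos : 0 < 1 - u := by linarith
  have h := log_le_sub_inv_div_two (one_le_inv_iff₀.2 ⟨hpos, by linarith⟩)
  rw [log_inv, inv_inv] at h
  have : ((1 - u)⁻¹ - (1 - u)) / 2 = 2 * (u / 2 + u ^ 2 / (4 * (1 - u))) := by
    field_simp
    ring
  rw [log_inv, log_sqrt hpos.le]
  linarith

namespace ProbabilityTheory

lemma lintegral_exp_mul_gaussianReal (c : ℝ) :
    ∫⁻ x, ENNReal.ofReal (exp (c * x)) ∂gaussianReal 0 1 = ENNReal.ofReal (exp (c ^ 2 / 2)) := by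
  rw [← ofReal_integral_eq_lintegral_ofReal (integrable_exp_mul_gaussianReal c)
    (ae_of_all _ fun _ => (exp_pos _).le)]
  have h := congrFun (mgf_id_gaussianReal (μ := 0) (v := 1)) c
  simp only [mgf, id] at h
  simp [h]

lemma lintegral_exp_mul_sq_gaussianReal {a : ℝ} (ha : 2 * a < 1) :
    ∫⁻ x, ENNReal.ofReal (exp (a * x ^ 2)) ∂gaussianReal 0 1 =
      ENNReal.ofReal (√(1 - 2 * a))⁻¹ := by
  have hb : 0 < 1 / 2 - a := by linarith
  have hdensity : ∀ x : ℝ, gaussianPDF 0 1 x * ENNReal.ofReal (exp (a * x ^ 2)) =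
      ENNReal.ofReal ((√(2 * π))⁻¹ * exp (-(1 / 2 - a) * x ^ 2)) := by
    intro x
    rw [gaussianPDF, gaussianPDFReal, ← ofReal_mul (by positivity), mul_assoc, ← exp_add]
    congr 3
    · simp
    · simp only [NNReal.coe_one]
      ring
  rw [gaussianReal_of_var_ne_zero _ one_ne_zero,
    lintegral_withDensity_eq_lintegral_mul _ (measurable_gaussianPDF 0 1) (by fun_prop)]
  simp only [Pi.mul_apply, hdensity]
  rw [← ofReal_integral_eq_lintegral_ofReal ((integrable_exp_neg_mul_sq hb).const_mul _)
    (ae_of_all _ fun _ => by positivity), integral_const_mul, integral_gaussian,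
    ← sqrt_inv, ← sqrt_inv, ← sqrt_mul (by positivity)]
  congr 2
  field_simp

lemma cgf_sub_const {Ω : Type*} [MeasurableSpace Ω] {μ : Measure Ω} {X : Ω → ℝ} {t : ℝ}
    (a : ℝ) (h : mgf X μ t ≠ 0) :
    cgf (fun ω => X ω - a) μ t = cgf X μ t - t * a := by
  simp_rw [cgf, sub_eq_add_neg, mgf_add_const, log_mul h (exp_ne_zero _), log_exp, mul_neg]

section SquareOfSubGaussian

variable {Ω : Type*} [MeasurableSpace Ω] {μ : Measure Ω} {X : Ω → ℝ}

lemma lintegral_exp_mul_le_of_cgf_le {t b : ℝ}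
    (h_int : Integrable (fun ω => exp (t * X ω)) μ) (h : cgf X μ t ≤ b) :
    ∫⁻ ω, ENNReal.ofReal (exp (t * X ω)) ∂μ ≤ ENNReal.ofReal (exp b) := by
  rw [← ofReal_integral_eq_lintegral_ofReal h_int (ae_of_all _ fun _ => (exp_pos _).le)]
  exact ofReal_le_ofReal ((le_exp_log _).trans (exp_le_exp.2 h))

lemma lintegral_exp_mul_sq_eq_lintegral_gaussianReal [SFinite μ] (hX : Measurable X) {s : ℝ}
    (hs : 0 ≤ s) :
    ∫⁻ ω, ENNReal.ofReal (exp (s * X ω ^ 2)) ∂μ =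
      ∫⁻ x, ∫⁻ ω, ENNReal.ofReal (exp (√(2 * s) * x * X ω)) ∂μ ∂gaussianReal 0 1 := by
  have hsq : √(2 * s) ^ 2 = 2 * s := sq_sqrt (by linarith)
  have hgauss : ∀ ω, ENNReal.ofReal (exp (s * X ω ^ 2)) =
      ∫⁻ x, ENNReal.ofReal (exp (√(2 * s) * x * X ω)) ∂gaussianReal 0 1 := by
    intro ω
    simp_rw [mul_right_comm _ _ (X ω), lintegral_exp_mul_gaussianReal, mul_pow, hsq]
    ring_nf
  simp_rw [hgauss]
  exact lintegral_lintegral_swap (by fun_prop)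

lemma lintegral_exp_mul_sq_le [SFinite μ] (hX : Measurable X) {σ2 s : ℝ}
    (hmgf : ∀ t, ∫⁻ ω, ENNReal.ofReal (exp (t * X ω)) ∂μ ≤ ENNReal.ofReal (exp (σ2 * t ^ 2 / 2)))
    (hs : 0 ≤ s) (hσs : 2 * σ2 * s < 1) :
    ∫⁻ ω, ENNReal.ofReal (exp (s * X ω ^ 2)) ∂μ ≤ ENNReal.ofReal (√(1 - 2 * σ2 * s))⁻¹ := by
  have hsq : √(2 * s) ^ 2 = 2 * s := sq_sqrt (by linarith)
  calc ∫⁻ ω, ENNReal.ofReal (exp (s * X ω ^ 2)) ∂μ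
      = ∫⁻ x, ∫⁻ ω, ENNReal.ofReal (exp (√(2 * s) * x * X ω)) ∂μ ∂gaussianReal 0 1 :=
        lintegral_exp_mul_sq_eq_lintegral_gaussianReal hX hs
    _ ≤ ∫⁻ x, ENNReal.ofReal (exp (σ2 * s * x ^ 2)) ∂gaussianReal 0 1 := by
        refine lintegral_mono fun x => (hmgf _).trans_eq ?_
        rw [mul_pow, hsq]
        ring_nf
    _ = ENNReal.ofReal (√(1 - 2 * σ2 * s))⁻¹ := by
        rw [lintegral_exp_mul_sq_gaussianReal (by linarith), mul_assoc]

lemma integrable_exp_mul_sq_and_cgf_sq_le [SFinite μ] [NeZero μ] (hX : Measurable X)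
    {σ2 s : ℝ}
    (hmgf : ∀ t, ∫⁻ ω, ENNReal.ofReal (exp (t * X ω)) ∂μ ≤ ENNReal.ofReal (exp (σ2 * t ^ 2 / 2)))
    (hσ2 : 0 ≤ σ2) (hs : 0 ≤ s) (hσs : 2 * σ2 * s < 1) :
    Integrable (fun ω => exp (s * X ω ^ 2)) μ ∧
      cgf (fun ω => X ω ^ 2) μ s ≤ σ2 * s + σ2 ^ 2 * s ^ 2 / (1 - 2 * σ2 * s) := by
  have hle := lintegral_exp_mul_sq_le hX hmgf hs hσs
  have h_nonneg : 0 ≤ᵐ[μ] fun ω => exp (s * X ω ^ 2) := ae_of_all _ fun _ => (exp_pos _).le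
  have h_int : Integrable (fun ω => exp (s * X ω ^ 2)) μ :=
    (lintegral_ofReal_ne_top_iff_integrable (by fun_prop) h_nonneg).1
      (ne_top_of_le_ne_top ofReal_ne_top hle)
  have h_mgf : mgf (fun ω => X ω ^ 2) μ s ≤ (√(1 - 2 * σ2 * s))⁻¹ := by
    rwa [← ofReal_le_ofReal_iff (by positivity), mgf,
      ofReal_integral_eq_lintegral_ofReal h_int h_nonneg]
  have hpos : 1 - 2 * σ2 * s ≠ 0 := by linarith
  refine ⟨h_int, ?_⟩
  calc cgf (fun ω => X ω ^ 2) μ s ≤ log (√(1 - 2 * σ2 * s))⁻¹ :=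
        log_le_log (integral_exp_pos h_int) h_mgf
    _ ≤ 2 * σ2 * s / 2 + (2 * σ2 * s) ^ 2 / (4 * (1 - 2 * σ2 * s)) :=
        log_inv_sqrt_one_sub_le (by positivity) hσs
    _ = σ2 * s + σ2 ^ 2 * s ^ 2 / (1 - 2 * σ2 * s) := by
        field_simp
        ring

end SquareOfSubGaussian

end ProbabilityTheory

theorem square_of_subGaussian_general
    {Ω : Type*} [MeasurableSpace Ω] (μ : Measure Ω) [IsProbabilityMeasure μ]
    (Y : Ω → ℝ) (hY : Measurable Y)
    (σ2 : ℝ)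
    (hint : ∀ s : ℝ, Integrable (fun ω => Real.exp (s * Y ω)) μ)
    (hsub : ∀ s : ℝ, Real.log (∫ ω, Real.exp (s * Y ω) ∂μ) ≤ σ2 * s ^ 2 / 2) :
    (∀ s : ℝ, 0 ≤ s → s < 1 / (2 * σ2) →
      Integrable (fun ω => Real.exp (s * (Y ω) ^ 2)) μ ∧
      Real.log (∫ ω, Real.exp (s * (Y ω) ^ 2) ∂μ) ≤
        σ2 * s + σ2 ^ 2 * s ^ 2 / (1 - 2 * σ2 * s)) ∧
    (∀ s : ℝ, 0 < s → s < 1 / (4 * σ2) →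
      Real.log (∫ ω, Real.exp (s * ((Y ω) ^ 2 - 2 * σ2)) ∂μ) ≤
        (8 * σ2 ^ 2) * s ^ 2 / (2 * (1 - 4 * σ2 * s))) := by
  have hmgf t := lintegral_exp_mul_le_of_cgf_le (hint t) (hsub t)
  refine ⟨fun s hs hsσ => ?_, fun s hs hsσ => ?_⟩
  · have hσ2 : 0 < 2 * σ2 := one_div_pos.1 (hs.trans_lt hsσ)
    rw [lt_div_iff₀ hσ2, mul_comm] at hsσ
    exact integrable_exp_mul_sq_and_cgf_sq_le hY hmgf (by linarith) hs hsσ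
  · have hσ2 : 0 < 4 * σ2 := one_div_pos.1 (hs.le.trans_lt hsσ)
    rw [lt_div_iff₀ hσ2, mul_comm] at hsσ
    obtain ⟨h_int, h_cgf⟩ :=
      integrable_exp_mul_sq_and_cgf_sq_le hY hmgf (by linarith) hs.le (by linarith)
    change cgf (fun ω => Y ω ^ 2 - 2 * σ2) μ s ≤ _
    rw [cgf_sub_const _ (integral_exp_pos h_int).ne']
    calc cgf (fun ω => Y ω ^ 2) μ s - s * (2 * σ2) ≤ σ2 ^ 2 * s ^ 2 / (1 - 2 * σ2 * s) := by
          linarith [mul_pos hσ2 hs]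
      _ ≤ 8 * σ2 ^ 2 * s ^ 2 / (2 * (1 - 4 * σ2 * s)) := by
          rw [div_le_div_iff₀ (by linarith) (by linarith)]
          nlinarith [mul_nonneg (sq_nonneg (σ2 * s)) (mul_pos hσ2 hs).le]

/-- The square of a sub-Gaussian random variable: moment generating function bound,
and the sub-Gamma (right tail) property of the shifted square `Y² − 2σ²`. -/
theorem square_of_subGaussian
    {Ω : Type*} [MeasurableSpace Ω] (μ : Measure Ω) [IsProbabilityMeasure μ]
    (Y : Ω → ℝ) (hY : Measurable Y)
    (σ2 : ℝ) (hσ2 : 0 < σ2)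
    (hint : ∀ s : ℝ, Integrable (fun ω => Real.exp (s * Y ω)) μ)
    (hsub : ∀ s : ℝ, Real.log (∫ ω, Real.exp (s * Y ω) ∂μ) ≤ σ2 * s ^ 2 / 2) :
    (∀ s : ℝ, 0 ≤ s → s < 1 / (2 * σ2) →
      Integrable (fun ω => Real.exp (s * (Y ω) ^ 2)) μ ∧
      Real.log (∫ ω, Real.exp (s * (Y ω) ^ 2) ∂μ) ≤
        σ2 * s + σ2 ^ 2 * s ^ 2 / (1 - 2 * σ2 * s)) ∧
    (∀ s : ℝ, 0 < s → s < 1 / (4 * σ2) →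
      Real.log (∫ ω, Real.exp (s * ((Y ω) ^ 2 - 2 * σ2)) ∂μ) ≤
        (8 * σ2 ^ 2) * s ^ 2 / (2 * (1 - 4 * σ2 * s))) :=
  square_of_subGaussian_general μ Y hY σ2 hint hsub
end

section
/- Let {y_k}, {u_k}, {a_k}, {b_k} be sequences of nonnegative random variables adapted to a filtration {F_k} such that almost surely Σ_k a_k < ∞ and Σ_k b_k < ∞, and for all k, E[y_{k+1} | F_k] ≤ (1 + a_k) y_k − u_k + b_k. Then almost surely the sequence {y_k} converges (to a finite limit) and Σ_k u_k < ∞. -/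
/-!
Dividing by the products `P n = ∏_{k<n} (1 + a k)` absorbs the multiplicative perturbation, so that
`W n = y n / P n + ∑_{k<n} (u k - b k) / P (k + 1)` is a supermartingale. It is bounded below only
by the predictable nondecreasing process `-∑_{k<n} b k / P (k + 1)`; stopped just before this
process drops below `-c`, it is a supermartingale bounded below by an integrable variable, hence
converges almost surely, and on the event that the process stays above `-c` the stopped process is
`W` itself. Finally `P` has a finite limit `≥ 1` when `∑ a k < ∞`, so convergence of `W` yields both
the convergence of `y` and `∑ u k < ∞`.
-/

open MeasureTheory Filter Finset Topology

/-- If `σ` is the first `k` with `c < A (k + 1)`, this is `v (min n σ) - v 0`. -/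
noncomputable def stoppedIncrements (v A : ℕ → ℝ) (c : ℝ) (n : ℕ) : ℝ :=
  ∑ k ∈ range n, (if A (k + 1) ≤ c then 1 else 0) * (v (k + 1) - v k)

lemma stoppedIncrements_spec {v A : ℕ → ℝ} {c : ℝ} (hc : 0 ≤ c) (hA : Monotone A)
    (hvA : ∀ n, v n ≤ A n) (n : ℕ) :
    (A n ≤ c → stoppedIncrements v A c n = v n - v 0) ∧
      stoppedIncrements v A c n ≤ c + |v 0| := by
  induction n with
  | zero => simpa [stoppedIncrements] using add_nonneg hc (abs_nonneg (v 0))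
  | succ n ih =>
    rw [stoppedIncrements, sum_range_succ, ← stoppedIncrements]
    by_cases h : A (n + 1) ≤ c
    · rw [if_pos h, ih.1 ((hA n.le_succ).trans h)]
      exact ⟨fun _ => by ring, by linarith [hvA (n + 1), neg_abs_le (v 0)]⟩
    · rw [if_neg h, zero_mul, add_zero]
      exact ⟨fun h' => absurd h' h, ih.2⟩

namespace MeasureTheory

variable {Ω : Type*} {m m0 : MeasurableSpace Ω} {μ : Measure Ω}

theorem Integrable.div_of_one_le {f g : Ω → ℝ} (hf : Integrable f μ)
    (hg : AEStronglyMeasurable g μ) (hg_one : ∀ᵐ ω ∂μ, 1 ≤ g ω) :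
    Integrable (fun ω => f ω / g ω) μ :=
  hf.mono (hf.aestronglyMeasurable.div₀ hg) <| by
    filter_upwards [hg_one] with ω hω
    rw [norm_div]
    exact div_le_self (norm_nonneg _) (hω.trans (le_abs_self _))

theorem condExp_div_add_of_stronglyMeasurable (hm : m ≤ m0) [SigmaFinite (μ.trim hm)]
    {X f g : Ω → ℝ} (hf : StronglyMeasurable[m] f) (hg : StronglyMeasurable[m] g)
    (hX : Integrable X μ) (hXf : Integrable (fun ω => X ω / f ω) μ) (hg_int : Integrable g μ) :
    μ[fun ω => X ω / f ω + g ω | m] =ᵐ[μ] fun ω => μ[X | m] ω / f ω + g ω := by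
  have h_div : (fun ω => X ω / f ω) = f⁻¹ * X := by
    ext ω; simp [div_eq_inv_mul]
  have h_pull := condExp_mul_of_stronglyMeasurable_left (μ := μ)
    hf.measurable.inv.stronglyMeasurable (h_div ▸ hXf) hX
  filter_upwards [condExp_add hXf hg_int m, h_pull] with ω h_add h_mul
  change μ[(fun ω => X ω / f ω) + g | m] ω = _
  rw [h_add, Pi.add_apply, h_div, h_mul, condExp_of_stronglyMeasurable hm hg hg_int]
  simp [div_eq_inv_mul]

variable [IsFiniteMeasure μ] {ℱ : Filtration ℕ m0} {f : ℕ → Ω → ℝ}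

theorem Submartingale.exists_ae_tendsto_of_le {g : Ω → ℝ} (hf : Submartingale f ℱ μ)
    (hg : Integrable g μ) (hfg : ∀ n, f n ≤ᵐ[μ] g) :
    ∀ᵐ ω ∂μ, ∃ c, Tendsto (fun n => f n ω) atTop (𝓝 c) := by
  refine hf.exists_ae_tendsto_of_bdd
    (R := (2 * ∫ ω, |g ω| ∂μ - ∫ ω, f 0 ω ∂μ).toNNReal) fun n => ?_
  have h_mono : ∫ ω, f 0 ω ∂μ ≤ ∫ ω, f n ω ∂μ := by
    simpa using hf.setIntegral_le (Nat.zero_le n) MeasurableSet.univ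
  -- `|x| ≤ 2 |y| - x` whenever `x ≤ y`
  have h_abs : ∫ ω, ‖f n ω‖ ∂μ ≤ ∫ ω, (2 * |g ω| - f n ω) ∂μ := by
    refine integral_mono_ae (hf.integrable n).norm ((hg.abs.const_mul 2).sub (hf.integrable n)) ?_
    filter_upwards [hfg n] with ω hω
    rw [Real.norm_eq_abs]
    cases abs_cases (f n ω) <;> linarith [le_abs_self (g ω), abs_nonneg (g ω)]
  rw [integral_sub (hg.abs.const_mul 2) (hf.integrable n), integral_const_mul] at h_abs
  rw [eLpNorm_one_eq_lintegral_enorm, ← ofReal_integral_norm_eq_lintegral_enorm (hf.integrable n)]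
  exact ENNReal.ofReal_le_ofReal (by linarith)

theorem Submartingale.exists_ae_tendsto_of_le_predictable {A : ℕ → Ω → ℝ}
    (hf : Submartingale f ℱ μ) (hA : Adapted ℱ fun n => A (n + 1))
    (hA_mono : ∀ᵐ ω ∂μ, Monotone fun n => A n ω) (hfA : ∀ᵐ ω ∂μ, ∀ n, f n ω ≤ A n ω) :
    ∀ᵐ ω ∂μ, BddAbove (Set.range fun n => A n ω) →
      ∃ c, Tendsto (fun n => f n ω) atTop (𝓝 c) := by
  have h_stopped (c : ℕ) : ∀ᵐ ω ∂μ, ∃ l,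
      Tendsto (fun n => stoppedIncrements (f · ω) (A · ω) c n) atTop (𝓝 l) := by
    set ξ : ℕ → Ω → ℝ := fun k ω => if A (k + 1) ω ≤ c then 1 else 0
    have hξ : StronglyAdapted ℱ ξ := fun k =>
      (Measurable.ite (measurableSet_le (hA k) measurable_const) measurable_const
        measurable_const).stronglyMeasurable
    have hN := hf.sum_mul_sub hξ (R := 1) (fun k ω => by dsimp [ξ]; split_ifs <;> norm_num)
      (fun k ω => by dsimp [ξ]; split_ifs <;> norm_num)
    have h_conv := hN.exists_ae_tendsto_of_le (g := fun ω => c + |f 0 ω|)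
      ((integrable_const _).add (hf.integrable 0).abs) fun n => by
        filter_upwards [hA_mono, hfA] with ω hω hωf
        simpa [stoppedIncrements, ξ, Finset.sum_apply] using
          (stoppedIncrements_spec c.cast_nonneg hω hωf n).2
    filter_upwards [h_conv] with ω ⟨l, hl⟩
    exact ⟨l, by simpa [stoppedIncrements, ξ, Finset.sum_apply] using hl⟩
  filter_upwards [ae_all_iff.2 h_stopped, hA_mono, hfA] with ω hω hmono hωf ⟨C, hC⟩
  obtain ⟨c, hc⟩ := exists_nat_ge C
  obtain ⟨l, hl⟩ := hω c
  refine ⟨l + f 0 ω, (hl.add_const (f 0 ω)).congr fun n => ?_⟩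
  rw [(stoppedIncrements_spec c.cast_nonneg hmono hωf n).1 ((hC ⟨n, rfl⟩).trans hc)]
  ring

end MeasureTheory

namespace RobbinsSiegmund

noncomputable def discount (a : ℕ → ℝ) (n : ℕ) : ℝ := ∏ k ∈ range n, (1 + a k)

noncomputable def discountedSum (a v : ℕ → ℝ) (n : ℕ) : ℝ := ∑ k ∈ range n, v k / discount a (k + 1)

noncomputable def discounted (a y u b : ℕ → ℝ) (n : ℕ) : ℝ :=
  y n / discount a n + discountedSum a u n - discountedSum a b n

section Sequences

variable {a : ℕ → ℝ}

lemma discount_succ (a : ℕ → ℝ) (n : ℕ) : discount a (n + 1) = discount a n * (1 + a n) :=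
  prod_range_succ _ _

lemma discountedSum_succ (a v : ℕ → ℝ) (n : ℕ) :
    discountedSum a v (n + 1) = discountedSum a v n + v n / discount a (n + 1) :=
  sum_range_succ _ _

lemma one_le_discount (ha : ∀ k, 0 ≤ a k) (n : ℕ) : 1 ≤ discount a n :=
  one_le_prod fun k _ => le_add_of_nonneg_right (ha k)

lemma discount_pos (ha : ∀ k, 0 ≤ a k) (n : ℕ) : 0 < discount a n :=
  zero_lt_one.trans_le (one_le_discount ha n)

lemma monotone_discount (ha : ∀ k, 0 ≤ a k) : Monotone (discount a) :=
  monotone_nat_of_le_succ fun n => by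
    rw [discount_succ]
    exact le_mul_of_one_le_right (discount_pos ha n).le (le_add_of_nonneg_right (ha n))

lemma exists_tendsto_discount (hsum : Summable a) : ∃ L, Tendsto (discount a) atTop (𝓝 L) :=
  ⟨_, (Real.multipliable_one_add_of_summable hsum).hasProd.tendsto_prod_nat⟩

lemma discountedSum_nonneg {v : ℕ → ℝ} (ha : ∀ k, 0 ≤ a k) (hv : ∀ k, 0 ≤ v k) (n : ℕ) :
    0 ≤ discountedSum a v n :=
  sum_nonneg fun k _ => div_nonneg (hv k) (discount_pos ha _).le

lemma monotone_discountedSum {v : ℕ → ℝ} (ha : ∀ k, 0 ≤ a k) (hv : ∀ k, 0 ≤ v k) :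
    Monotone (discountedSum a v) :=
  monotone_nat_of_le_succ fun n => by
    rw [discountedSum_succ]
    exact le_add_of_nonneg_right (div_nonneg (hv n) (discount_pos ha _).le)

lemma summable_div_discount {v : ℕ → ℝ} (ha : ∀ k, 0 ≤ a k) (hv : ∀ k, 0 ≤ v k)
    (hsum : Summable v) : Summable fun k => v k / discount a (k + 1) :=
  hsum.of_nonneg_of_le (fun k => div_nonneg (hv k) (discount_pos ha _).le)
    fun k => div_le_self (hv k) (one_le_discount ha _)

lemma summable_of_summable_div_discount {v : ℕ → ℝ} (ha : ∀ k, 0 ≤ a k) (hv : ∀ k, 0 ≤ v k)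
    (hasum : Summable a) (hsum : Summable fun k => v k / discount a (k + 1)) : Summable v := by
  obtain ⟨L, hL⟩ := exists_tendsto_discount hasum
  refine (hsum.mul_right L).of_nonneg_of_le hv fun k => ?_
  calc v k = v k / discount a (k + 1) * discount a (k + 1) :=
        (div_mul_cancel₀ _ (discount_pos ha _).ne').symm
    _ ≤ v k / discount a (k + 1) * L :=
        mul_le_mul_of_nonneg_left ((monotone_discount ha).ge_of_tendsto hL _)
          (div_nonneg (hv k) (discount_pos ha _).le)

lemma discountedSum_le_tsum {v : ℕ → ℝ} (ha : ∀ k, 0 ≤ a k) (hv : ∀ k, 0 ≤ v k)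
    (hsum : Summable v) (n : ℕ) :
    discountedSum a v n ≤ ∑' k, v k / discount a (k + 1) :=
  (summable_div_discount ha hv hsum).sum_le_tsum _ fun k _ => div_nonneg (hv k) (discount_pos ha _).le

lemma discounted_succ_le {y u b : ℕ → ℝ} (ha : ∀ k, 0 ≤ a k) {n : ℕ} {z : ℝ}
    (hz : z ≤ (1 + a n) * y n - u n + b n) :
    z / discount a (n + 1) + discountedSum a u (n + 1) - discountedSum a b (n + 1) ≤
      discounted a y u b n := by
  have hP : discount a n ≠ 0 := (discount_pos ha n).ne'
  have ha1 : 1 + a n ≠ 0 := by linarith [ha n]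
  have hz' : z / discount a (n + 1) ≤ ((1 + a n) * y n - u n + b n) / discount a (n + 1) :=
    div_le_div_of_nonneg_right hz (discount_pos ha _).le
  have hstep : ((1 + a n) * y n - u n + b n) / discount a (n + 1) + u n / discount a (n + 1) -
      b n / discount a (n + 1) = y n / discount a n := by
    rw [discount_succ]
    field_simp
    ring
  rw [discountedSum_succ, discountedSum_succ, discounted]
  linarith

lemma neg_discounted_le {y u b : ℕ → ℝ} (hy : ∀ n, 0 ≤ y n) (hu : ∀ n, 0 ≤ u n)
    (ha : ∀ n, 0 ≤ a n) (n : ℕ) : -discounted a y u b n ≤ discountedSum a b n := by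
  have hyn : 0 ≤ y n / discount a n := div_nonneg (hy n) (discount_pos ha n).le
  have hun := discountedSum_nonneg ha hu n
  rw [discounted]
  linarith

theorem tendsto_and_summable_of_tendsto_discounted {y u b : ℕ → ℝ} {l : ℝ}
    (hy : ∀ n, 0 ≤ y n) (hu : ∀ n, 0 ≤ u n) (ha : ∀ n, 0 ≤ a n) (hb : ∀ n, 0 ≤ b n)
    (hasum : Summable a) (hbsum : Summable b) (hW : Tendsto (discounted a y u b) atTop (𝓝 l)) :
    (∃ l, Tendsto y atTop (𝓝 l)) ∧ Summable u := by
  obtain ⟨M, hM⟩ := hW.bddAbove_range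
  have hu_disc : Summable fun k => u k / discount a (k + 1) := by
    refine summable_of_sum_range_le (fun k => div_nonneg (hu k) (discount_pos ha _).le)
      (c := M + ∑' k, b k / discount a (k + 1)) fun n => ?_
    have hWn : discounted a y u b n ≤ M := hM ⟨n, rfl⟩
    have hyn : 0 ≤ y n / discount a n := div_nonneg (hy n) (discount_pos ha n).le
    have hbn := discountedSum_le_tsum ha hb hbsum n
    change discountedSum a u n ≤ _
    rw [discounted] at hWn
    linarith
  refine ⟨?_, summable_of_summable_div_discount ha hu hasum hu_disc⟩
  have hy_disc : Tendsto (fun n => y n / discount a n) atTop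
      (𝓝 (l - ∑' k, u k / discount a (k + 1) + ∑' k, b k / discount a (k + 1))) :=
    ((hW.sub hu_disc.hasSum.tendsto_sum_nat).add
      (summable_div_discount ha hb hbsum).hasSum.tendsto_sum_nat).congr fun n => by
        simp only [discounted, discountedSum]; ring
  obtain ⟨L, hL⟩ := exists_tendsto_discount hasum
  exact ⟨_, (hy_disc.mul hL).congr fun n => div_mul_cancel₀ _ (discount_pos ha n).ne'⟩

end Sequences

section Stochastic

variable {Ω : Type*} {m0 : MeasurableSpace Ω} {μ : Measure Ω} {ℱ : Filtration ℕ m0}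
  {a : ℕ → Ω → ℝ}

lemma measurable_discount (ha : Adapted ℱ a) {n k : ℕ} (hnk : n ≤ k + 1) :
    Measurable[ℱ k] fun ω => discount (a · ω) n :=
  Finset.measurable_fun_prod _ fun j hj =>
    measurable_const.add <| (ha j).mono (ℱ.mono (by grind)) le_rfl

lemma measurable_discountedSum {v : ℕ → Ω → ℝ} (ha : Adapted ℱ a) (hv : Adapted ℱ v) {n k : ℕ}
    (hnk : n ≤ k + 1) : Measurable[ℱ k] fun ω => discountedSum (a · ω) (v · ω) n :=
  Finset.measurable_fun_sum _ fun j hj =>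
    ((hv j).mono (ℱ.mono (by grind)) le_rfl).div (measurable_discount ha (by grind))

lemma integrable_div_discount {f : Ω → ℝ} (ha : Adapted ℱ a) (ha_nonneg : ∀ᵐ ω ∂μ, ∀ k, 0 ≤ a k ω)
    (hf : Integrable f μ) (n : ℕ) : Integrable (fun ω => f ω / discount (a · ω) n) μ :=
  hf.div_of_one_le ((measurable_discount ha n.le_succ).mono (ℱ.le n) le_rfl).aestronglyMeasurable
    (by filter_upwards [ha_nonneg] with ω hω using one_le_discount hω n)

lemma integrable_discountedSum {v : ℕ → Ω → ℝ} (ha : Adapted ℱ a)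
    (ha_nonneg : ∀ᵐ ω ∂μ, ∀ k, 0 ≤ a k ω) (hv : ∀ k, Integrable (v k) μ) (n : ℕ) :
    Integrable (fun ω => discountedSum (a · ω) (v · ω) n) μ :=
  integrable_finsetSum _ fun k _ => integrable_div_discount ha ha_nonneg (hv k) (k + 1)

theorem supermartingale_discounted [IsFiniteMeasure μ] {y u b : ℕ → Ω → ℝ}
    (hy : Adapted ℱ y) (hu : Adapted ℱ u) (ha : Adapted ℱ a) (hb : Adapted ℱ b)
    (hy_int : ∀ k, Integrable (y k) μ) (hu_int : ∀ k, Integrable (u k) μ)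
    (hb_int : ∀ k, Integrable (b k) μ) (ha_nonneg : ∀ᵐ ω ∂μ, ∀ k, 0 ≤ a k ω)
    (hrec : ∀ k, ∀ᵐ ω ∂μ, μ[y (k + 1) | ℱ k] ω ≤ (1 + a k ω) * y k ω - u k ω + b k ω) :
    Supermartingale (fun n ω => discounted (a · ω) (y · ω) (u · ω) (b · ω) n) ℱ μ := by
  have h_int (n : ℕ) : Integrable (fun ω => discountedSum (a · ω) (u · ω) n -
      discountedSum (a · ω) (b · ω) n) μ :=
    (integrable_discountedSum ha ha_nonneg hu_int n).sub
      (integrable_discountedSum ha ha_nonneg hb_int n)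
  have h_meas {n k : ℕ} (hnk : n ≤ k + 1) : Measurable[ℱ k] fun ω =>
      discountedSum (a · ω) (u · ω) n - discountedSum (a · ω) (b · ω) n :=
    (measurable_discountedSum ha hu hnk).sub (measurable_discountedSum ha hb hnk)
  have h_eq (n : ℕ) : (fun ω => discounted (a · ω) (y · ω) (u · ω) (b · ω) n) = fun ω =>
      y n ω / discount (a · ω) n +
        (discountedSum (a · ω) (u · ω) n - discountedSum (a · ω) (b · ω) n) := by
    ext ω; exact add_sub_assoc _ _ _
  refine supermartingale_nat (fun n => ?_) (fun n => ?_) fun k => ?_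
  · rw [h_eq]
    exact ((hy n).div (measurable_discount ha n.le_succ)).add
      (h_meas n.le_succ) |>.stronglyMeasurable
  · rw [h_eq]
    exact (integrable_div_discount ha ha_nonneg (hy_int n) n).add (h_int n)
  · rw [h_eq (k + 1)]
    filter_upwards [condExp_div_add_of_stronglyMeasurable (ℱ.le k)
      (measurable_discount ha le_rfl).stronglyMeasurable (h_meas le_rfl).stronglyMeasurable
      (hy_int (k + 1)) (integrable_div_discount ha ha_nonneg (hy_int (k + 1)) (k + 1))
      (h_int (k + 1)), hrec k, ha_nonneg] with ω h_condExp h_rec hω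
    rw [h_condExp, ← add_sub_assoc]
    exact discounted_succ_le hω h_rec

end Stochastic

end RobbinsSiegmund

open RobbinsSiegmund

theorem robbins_siegmund_general
    {Ω : Type*} [m0 : MeasurableSpace Ω] (μ : Measure Ω) [IsProbabilityMeasure μ]
    (F : Filtration ℕ m0)
    (y u a b : ℕ → Ω → ℝ)
    (hy_adapted : Adapted F y) (hu_adapted : Adapted F u)
    (ha_adapted : Adapted F a) (hb_adapted : Adapted F b)
    (hy_int : ∀ k, Integrable (y k) μ) (hu_int : ∀ k, Integrable (u k) μ)
    (hb_int : ∀ k, Integrable (b k) μ)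
    (hy_nonneg : ∀ k, ∀ᵐ ω ∂μ, 0 ≤ y k ω)
    (hu_nonneg : ∀ k, ∀ᵐ ω ∂μ, 0 ≤ u k ω)
    (ha_nonneg : ∀ k, ∀ᵐ ω ∂μ, 0 ≤ a k ω)
    (hb_nonneg : ∀ k, ∀ᵐ ω ∂μ, 0 ≤ b k ω)
    (ha_sum : ∀ᵐ ω ∂μ, Summable fun k => a k ω)
    (hb_sum : ∀ᵐ ω ∂μ, Summable fun k => b k ω)
    (hrec : ∀ k, ∀ᵐ ω ∂μ,
      (μ[y (k + 1) | F k]) ω ≤ (1 + a k ω) * y k ω - u k ω + b k ω) :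
    ∀ᵐ ω ∂μ, (∃ l : ℝ, Tendsto (fun k => y k ω) atTop (nhds l)) ∧
      Summable fun k => u k ω := by
  rw [← ae_all_iff] at hy_nonneg hu_nonneg ha_nonneg hb_nonneg
  have hW := supermartingale_discounted hy_adapted hu_adapted ha_adapted hb_adapted
    hy_int hu_int hb_int ha_nonneg hrec
  have hW_conv := hW.neg.exists_ae_tendsto_of_le_predictable
    (A := fun n ω => discountedSum (a · ω) (b · ω) n)
    (fun n => measurable_discountedSum ha_adapted hb_adapted le_rfl)
    (by filter_upwards [ha_nonneg, hb_nonneg] with ω ha hb using monotone_discountedSum ha hb)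
    (by filter_upwards [hy_nonneg, hu_nonneg, ha_nonneg] with ω hy hu ha n
          using neg_discounted_le hy hu ha n)
  filter_upwards [hW_conv, hy_nonneg, hu_nonneg, ha_nonneg, hb_nonneg, ha_sum, hb_sum]
    with ω h_conv hy hu ha hb hasum hbsum
  obtain ⟨l, hl⟩ := h_conv ⟨_, by
    rintro _ ⟨n, rfl⟩
    exact discountedSum_le_tsum ha hb hbsum n⟩
  exact tendsto_and_summable_of_tendsto_discounted hy hu ha hb hasum hbsum
    (l := -l) (by simpa using hl.neg)

/-- Robbins–Siegmund convergence theorem for nonnegative almost-supermartingales. -/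
theorem robbins_siegmund
    {Ω : Type*} [m0 : MeasurableSpace Ω] (μ : Measure Ω) [IsProbabilityMeasure μ]
    (F : Filtration ℕ m0)
    (y u a b : ℕ → Ω → ℝ)
    (hy_adapted : Adapted F y) (hu_adapted : Adapted F u)
    (ha_adapted : Adapted F a) (hb_adapted : Adapted F b)
    (hy_int : ∀ k, Integrable (y k) μ) (hu_int : ∀ k, Integrable (u k) μ)
    (ha_int : ∀ k, Integrable (a k) μ) (hb_int : ∀ k, Integrable (b k) μ)
    (hy_nonneg : ∀ k, ∀ᵐ ω ∂μ, 0 ≤ y k ω)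
    (hu_nonneg : ∀ k, ∀ᵐ ω ∂μ, 0 ≤ u k ω)
    (ha_nonneg : ∀ k, ∀ᵐ ω ∂μ, 0 ≤ a k ω)
    (hb_nonneg : ∀ k, ∀ᵐ ω ∂μ, 0 ≤ b k ω)
    (ha_sum : ∀ᵐ ω ∂μ, Summable fun k => a k ω)
    (hb_sum : ∀ᵐ ω ∂μ, Summable fun k => b k ω)
    (hrec : ∀ k, ∀ᵐ ω ∂μ,
      (μ[y (k + 1) | F k]) ω ≤ (1 + a k ω) * y k ω - u k ω + b k ω) :
    ∀ᵐ ω ∂μ, (∃ l : ℝ, Tendsto (fun k => y k ω) atTop (nhds l)) ∧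
      Summable fun k => u k ω :=
  robbins_siegmund_general (m0 := m0) μ F y u a b hy_adapted hu_adapted ha_adapted hb_adapted hy_int
    hu_int hb_int hy_nonneg hu_nonneg ha_nonneg hb_nonneg ha_sum hb_sum hrec
end

section
/- Let X ⊆ ℝ^d be nonempty closed convex and H : X → ℝ^d continuous. Given x ∈ X with x ≠ Π_X(x − βH(x)) for some β > 0, and parameters λ, θ ∈ (0,1), α̂ ∈ (0,1], the line search that seeks the largest α ∈ {θ^ℓ α̂ : ℓ ∈ ℕ₀} with ⟨H(αΠ_X(g) + (1−α)x), x − Π_X(g)⟩ ≥ (λ/β)‖x − Π_X(g)‖², where g := x − βH(x), terminates after finitely many iterations. That is, there exists ℓ ∈ ℕ₀ such that α = θ^ℓ α̂ satisfies the displayed inequality. -/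
/-!
By the obtuse-angle property of the projection (tested at `x ∈ X`),
`‖x - p‖² ≤ β ⟪H x, x - p⟫`, so `λ < 1` and `x ≠ p` make the search inequality strict at
`α = 0`. The grid points `θ^ℓ α̂ • p + (1 - θ^ℓ α̂) • x` lie in `X` and tend to `x`, so by
continuity of `H` on `X` the inequality holds for all large `ℓ`.
-/

open Filter Topology

/-- `p` is the Euclidean metric projection of `y` onto `C`. -/
def IsProjOn {E : Type*} [NormedAddCommGroup E] (C : Set E) (y p : E) : Prop :=
  p ∈ C ∧ ∀ c ∈ C, dist y p ≤ dist y c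

theorem IsProjOn.norm_sub_eq_iInf {E : Type*} [NormedAddCommGroup E] {C : Set E} {y p : E}
    (hp : IsProjOn C y p) :
    ‖y - p‖ = ⨅ c : C, ‖y - c‖ := by
  have : Nonempty C := ⟨⟨p, hp.1⟩⟩
  refine le_antisymm (le_ciInf fun c => ?_) ?_
  · simpa only [dist_eq_norm] using hp.2 c c.2
  · exact ciInf_le ⟨0, Set.forall_mem_range.2 fun _ => norm_nonneg _⟩ (⟨p, hp.1⟩ : C)

section InnerProductSpace

variable {E : Type*} [NormedAddCommGroup E] [InnerProductSpace ℝ E]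

theorem IsProjOn.inner_sub_le_zero {C : Set E} (hC : Convex ℝ C) {y p : E}
    (hp : IsProjOn C y p) {c : E} (hc : c ∈ C) : inner ℝ (y - p) (c - p) ≤ 0 :=
  (norm_eq_iInf_iff_real_inner_le_zero hC hp.1).mp hp.norm_sub_eq_iInf c hc

theorem IsProjOn.norm_sub_sq_le_smul_inner {C : Set E} (hC : Convex ℝ C) {x v p : E}
    {β : ℝ} (hx : x ∈ C) (hp : IsProjOn C (x - β • v) p) :
    ‖x - p‖ ^ 2 ≤ β * inner ℝ v (x - p) := by
  have hobtuse := hp.inner_sub_le_zero hC hx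
  rw [show x - β • v - p = (x - p) - β • v by abel, inner_sub_left, real_inner_smul_left,
    real_inner_self_eq_norm_sq] at hobtuse
  linarith

end InnerProductSpace

theorem tendsto_pow_mul_nhdsWithin_Icc_zero {θ a : ℝ} (hθ : θ ∈ Set.Ioo (0 : ℝ) 1)
    (ha : a ∈ Set.Ioc (0 : ℝ) 1) :
    Tendsto (fun ℓ : ℕ => θ ^ ℓ * a) atTop (𝓝[Set.Icc 0 1] 0) := by
  refine tendsto_nhdsWithin_of_tendsto_nhds_of_eventually_within _ ?_ (.of_forall fun ℓ => ?_)
  · simpa using (tendsto_pow_atTop_nhds_zero_of_lt_one hθ.1.le hθ.2).mul_const a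
  · exact ⟨by have := hθ.1; have := ha.1; positivity,
      mul_le_one₀ (pow_le_one₀ hθ.1.le hθ.2.le) ha.1.le ha.2⟩

theorem Convex.tendsto_combo_nhdsWithin {E : Type*} [NormedAddCommGroup E] [NormedSpace ℝ E]
    {C : Set E} (hC : Convex ℝ C) {x p : E} (hx : x ∈ C) (hp : p ∈ C) {ι : Type*}
    {l : Filter ι} {a : ι → ℝ} (ha : Tendsto a l (𝓝[Set.Icc 0 1] 0)) :
    Tendsto (fun i => a i • p + (1 - a i) • x) l (𝓝[C] x) := by
  refine tendsto_nhdsWithin_of_tendsto_nhds_of_eventually_within _ ?_ ?_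
  · have ha0 := tendsto_nhds_of_tendsto_nhdsWithin ha
    simpa using
      (ha0.smul_const p).add (((tendsto_const_nhds (x := (1 : ℝ))).sub ha0).smul_const x)
  · filter_upwards [tendsto_nhdsWithin_iff.mp ha |>.2] with i ⟨h0, h1⟩
    exact hC hp hx h0 (by linarith) (by ring)

theorem hyperplane_line_search_terminates_general
    {d : ℕ} (X : Set (EuclideanSpace ℝ (Fin d)))
    (hXconv : Convex ℝ X)
    (H : EuclideanSpace ℝ (Fin d) → EuclideanSpace ℝ (Fin d))
    (hH : ContinuousOn H X)
    (x : EuclideanSpace ℝ (Fin d)) (hx : x ∈ X)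
    (β : ℝ) (hβ : 0 < β)
    (lam θ αhat : ℝ) (hlam : lam ∈ Set.Ioo (0:ℝ) 1) (hθ : θ ∈ Set.Ioo (0:ℝ) 1)
    (hαhat : αhat ∈ Set.Ioc (0:ℝ) 1)
    (p : EuclideanSpace ℝ (Fin d))
    (hp : IsProjOn X (x - β • H x) p)
    (hne : x ≠ p) :
    ∃ ℓ : ℕ,
      (lam / β) * ‖x - p‖ ^ 2 ≤
        (inner ℝ (H ((θ ^ ℓ * αhat) • p + (1 - θ ^ ℓ * αhat) • x)) (x - p) : ℝ) := by
  have hproj := hp.norm_sub_sq_le_smul_inner hXconv hx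
  have hpos : 0 < ‖x - p‖ ^ 2 := by
    have := norm_pos_iff.mpr (sub_ne_zero.mpr hne)
    positivity
  have hlt : (lam / β) * ‖x - p‖ ^ 2 < inner ℝ (H x) (x - p) := by
    rw [div_mul_eq_mul_div, div_lt_iff₀ hβ]
    nlinarith [hlam.2]
  have hlim : Tendsto (fun ℓ : ℕ => inner ℝ (H ((θ ^ ℓ * αhat) • p + (1 - θ ^ ℓ * αhat) • x))
      (x - p)) atTop (𝓝 (inner ℝ (H x) (x - p))) :=
    ((hH x hx).tendsto.comp (hXconv.tendsto_combo_nhdsWithin hx hp.1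
      (tendsto_pow_mul_nhdsWithin_Icc_zero hθ hαhat))).inner tendsto_const_nhds
  obtain ⟨ℓ, hℓ⟩ := (hlim.eventually (eventually_gt_nhds hlt)).exists
  exact ⟨ℓ, hℓ.le⟩

/-- Finite termination of the hyperplane line search: if `x ≠ Π_X(x − βH(x))`,
then some `α = θ^ℓ α̂` on the geometric grid satisfies
`⟨H(αΠ_X(g) + (1−α)x), x − Π_X(g)⟩ ≥ (λ/β)‖x − Π_X(g)‖²`. -/
theorem hyperplane_line_search_terminates
    {d : ℕ} (X : Set (EuclideanSpace ℝ (Fin d)))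
    (hXne : X.Nonempty) (hXc : IsClosed X) (hXconv : Convex ℝ X)
    (H : EuclideanSpace ℝ (Fin d) → EuclideanSpace ℝ (Fin d))
    (hH : ContinuousOn H X)
    (x : EuclideanSpace ℝ (Fin d)) (hx : x ∈ X)
    (β : ℝ) (hβ : 0 < β)
    (lam θ αhat : ℝ) (hlam : lam ∈ Set.Ioo (0:ℝ) 1) (hθ : θ ∈ Set.Ioo (0:ℝ) 1)
    (hαhat : αhat ∈ Set.Ioc (0:ℝ) 1)
    (p : EuclideanSpace ℝ (Fin d))
    (hp : IsProjOn X (x - β • H x) p)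
    (hne : x ≠ p) :
    ∃ ℓ : ℕ,
      (lam / β) * ‖x - p‖ ^ 2 ≤
        (inner ℝ (H ((θ ^ ℓ * αhat) • p + (1 - θ ^ ℓ * αhat) • x)) (x - p) : ℝ) :=
  hyperplane_line_search_terminates_general X hXconv H hH x hx β hβ lam θ αhat hlam hθ hαhat p hp
    hne
end

section
/- Hyperplane projection recursion: let X ⊆ ℝ^d be closed convex, T : X → ℝ^d pseudo-monotone with x* ∈ X satisfying ⟨T(x*), y − x*⟩ ≥ 0 for all y ∈ X. Let x^k ∈ X, z^k ∈ X, e ∈ ℝ^d (the oracle error), v := T(z^k) + e with v ≠ 0, γ := ⟨v, x^k − z^k⟩/‖v‖² > 0, y^k := x^k − γ v, and x^{k+1} := Π_X(y^k). Then ‖x^{k+1} − x*‖² ≤ ‖x^k − x*‖² − ‖y^k − x^k‖² + 2γ ⟨e, x* − z^k⟩. -/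
namespace IsProjOn

variable {E : Type*} [NormedAddCommGroup E] {C : Set E} {y p : E}

theorem norm_sub_eq_iInf_s17 (h : IsProjOn C y p) : ‖y - p‖ = ⨅ c : C, ‖y - c‖ := by
  have : Nonempty C := ⟨⟨p, h.1⟩⟩
  refine le_antisymm (le_ciInf fun c => ?_) (ciInf_le ?_ (⟨p, h.1⟩ : C))
  · simpa only [dist_eq_norm] using h.2 c c.2
  · exact ⟨0, Set.forall_mem_range.2 fun _ => norm_nonneg _⟩

variable [InnerProductSpace ℝ E]

theorem real_inner_le_zero (hC : Convex ℝ C) (h : IsProjOn C y p) :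
    ∀ c ∈ C, inner ℝ (y - p) (c - p) ≤ 0 :=
  (norm_eq_iInf_iff_real_inner_le_zero hC h.1).1 h.norm_sub_eq_iInf_s17

theorem norm_sub_sq_le (hC : Convex ℝ C) (h : IsProjOn C y p) {c : E} (hc : c ∈ C) :
    ‖p - c‖ ^ 2 ≤ ‖y - c‖ ^ 2 - ‖y - p‖ ^ 2 := by
  have hinner : inner ℝ (y - p) (p - c) ≥ 0 := by
    rw [← neg_sub c p, inner_neg_right]
    linarith [h.real_inner_le_zero hC c hc]
  have hsplit : y - c = (y - p) + (p - c) := by abel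
  rw [hsplit, norm_add_sq_real]
  linarith

end IsProjOn

/-- `hγ` says that `y` is the orthogonal projection of `x` onto the hyperplane `⟪v, · - z⟫ = 0`. -/
theorem norm_sub_sq_of_hyperplane_step {E : Type*} [NormedAddCommGroup E]
    [InnerProductSpace ℝ E] {x y z v : E} {γ : ℝ} (hy : y = x - γ • v)
    (hγ : γ * ‖v‖ ^ 2 = inner ℝ v (x - z)) (w : E) :
    ‖y - w‖ ^ 2 = ‖x - w‖ ^ 2 - ‖y - x‖ ^ 2 - 2 * γ * inner ℝ v (z - w) := by
  have hyw : y - w = (x - w) - γ • v := by rw [hy]; abel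
  have hyx : y - x = -(γ • v) := by rw [hy]; abel
  have hzw : z - w = (x - w) - (x - z) := by abel
  rw [hyw, hyx, hzw, norm_neg, norm_sub_sq_real, norm_smul, mul_pow, Real.norm_eq_abs, sq_abs,
    real_inner_smul_right, inner_sub_right, real_inner_comm]
  linear_combination 2 * γ * hγ

theorem hyperplane_projection_recursion_general
    {d : ℕ} (X : Set (EuclideanSpace ℝ (Fin d)))
    (hXconv : Convex ℝ X)
    (T : EuclideanSpace ℝ (Fin d) → EuclideanSpace ℝ (Fin d))
    (hpseudo : ∀ x ∈ X, ∀ z ∈ X,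
      0 ≤ (inner ℝ (T x) (z - x) : ℝ) → 0 ≤ (inner ℝ (T z) (z - x) : ℝ))
    (xstar : EuclideanSpace ℝ (Fin d)) (hxstar : xstar ∈ X)
    (hsol : ∀ y ∈ X, 0 ≤ (inner ℝ (T xstar) (y - xstar) : ℝ))
    (xk zk : EuclideanSpace ℝ (Fin d)) (hzk : zk ∈ X)
    (e : EuclideanSpace ℝ (Fin d))
    (v : EuclideanSpace ℝ (Fin d)) (hv : v = T zk + e) (hvne : v ≠ 0)
    (γ : ℝ) (hγ : γ = (inner ℝ v (xk - zk) : ℝ) / ‖v‖ ^ 2) (hγpos : 0 < γ)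
    (yk : EuclideanSpace ℝ (Fin d)) (hyk : yk = xk - γ • v)
    (xk1 : EuclideanSpace ℝ (Fin d)) (hxk1 : IsProjOn X yk xk1) :
    ‖xk1 - xstar‖ ^ 2 ≤ ‖xk - xstar‖ ^ 2 - ‖yk - xk‖ ^ 2 +
      2 * γ * (inner ℝ e (xstar - zk) : ℝ) := by
  have hγv : γ * ‖v‖ ^ 2 = inner ℝ v (xk - zk) := by
    rw [hγ, div_mul_cancel₀ _ (by positivity)]
  have hTz : 0 ≤ inner ℝ (T zk) (zk - xstar) := hpseudo xstar hxstar zk hzk (hsol zk hzk)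
  have hvz : inner ℝ v (zk - xstar) = inner ℝ (T zk) (zk - xstar) - inner ℝ e (xstar - zk) := by
    rw [hv, inner_add_left, sub_eq_add_neg (inner ℝ (T zk) _), ← inner_neg_right, neg_sub]
  calc ‖xk1 - xstar‖ ^ 2 ≤ ‖yk - xstar‖ ^ 2 := by
        linarith [hxk1.norm_sub_sq_le hXconv hxstar, sq_nonneg ‖yk - xk1‖]
    _ = ‖xk - xstar‖ ^ 2 - ‖yk - xk‖ ^ 2 - 2 * γ * inner ℝ v (zk - xstar) :=
        norm_sub_sq_of_hyperplane_step hyk hγv xstar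
    _ ≤ _ := by rw [hvz]; linarith [mul_nonneg hγpos.le hTz]

/-- Recursive error bound for the hyperplane projection step:
`‖x^{k+1} − x*‖² ≤ ‖x^k − x*‖² − ‖y^k − x^k‖² + 2γ⟨e, x* − z^k⟩`. -/
theorem hyperplane_projection_recursion
    {d : ℕ} (X : Set (EuclideanSpace ℝ (Fin d)))
    (hXne : X.Nonempty) (hXc : IsClosed X) (hXconv : Convex ℝ X)
    (T : EuclideanSpace ℝ (Fin d) → EuclideanSpace ℝ (Fin d))
    (hpseudo : ∀ x ∈ X, ∀ z ∈ X,
      0 ≤ (inner ℝ (T x) (z - x) : ℝ) → 0 ≤ (inner ℝ (T z) (z - x) : ℝ))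
    (xstar : EuclideanSpace ℝ (Fin d)) (hxstar : xstar ∈ X)
    (hsol : ∀ y ∈ X, 0 ≤ (inner ℝ (T xstar) (y - xstar) : ℝ))
    (xk zk : EuclideanSpace ℝ (Fin d)) (hxk : xk ∈ X) (hzk : zk ∈ X)
    (e : EuclideanSpace ℝ (Fin d))
    (v : EuclideanSpace ℝ (Fin d)) (hv : v = T zk + e) (hvne : v ≠ 0)
    (γ : ℝ) (hγ : γ = (inner ℝ v (xk - zk) : ℝ) / ‖v‖ ^ 2) (hγpos : 0 < γ)
    (yk : EuclideanSpace ℝ (Fin d)) (hyk : yk = xk - γ • v)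
    (xk1 : EuclideanSpace ℝ (Fin d)) (hxk1 : IsProjOn X yk xk1) :
    ‖xk1 - xstar‖ ^ 2 ≤ ‖xk - xstar‖ ^ 2 - ‖yk - xk‖ ^ 2 +
      2 * γ * (inner ℝ e (xstar - zk) : ℝ) :=
  hyperplane_projection_recursion_general X hXconv T hpseudo xstar hxstar hsol xk zk hzk e v hv hvne
    γ hγ hγpos yk hyk xk1 hxk1
end
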